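/- Suppose the self-similar group G is contracting with nucleus N, the finite symmetric generating set S contains N, p ≥ 1, and η_{p,n₀} < 1 for some n₀ ≥ 1; set η_p := inf_{n ≥ 1} (η_{p,n})^{1/n}. Then for every η with η_p < η there exists C > 1 such that for every g ∈ G with g ≠ 1 and every n ≥ 0: the portrait satisfies |P(g) ∩ X^n| ≤ C·η^n·l(g)^p, and |P(g)| ≤ C·l(g)^p; in particular P(g) is finite. (Proposition 4.6 of the paper, made precise.) -/

import Mathlib

open Filter Topology
open scoped ENNReal NNReal

/-- A self-similar group: a group `G` acting on the set of finite words `List X`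
by length-preserving bijections, together with a section (restriction) map. -/
structure SelfSimilarGroup (X : Type*) (G : Type*) [Group G] where
  act : G → List X → List X
  sec : G → List X → G
  length_act : ∀ g v, (act g v).length = v.length
  act_append : ∀ g v w, act g (v ++ w) = act g v ++ act (sec g v) w
  sec_append : ∀ g v w, sec g (v ++ w) = sec (sec g v) w
  act_one : ∀ v, act 1 v = v
  sec_one : ∀ v, sec 1 v = 1
  act_mul : ∀ g h v, act (g * h) v = act g (act h v)
  sec_mul : ∀ g h v, sec (g * h) v = sec g (act h v) * sec h v

/-- Word length with respect to a finite generating set `S`. -/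
noncomputable def wordLength {G : Type*} [Group G] (S : Finset G) (g : G) : ℕ :=
  sInf {n | ∃ w : List G, (∀ s ∈ w, s ∈ S) ∧ w.length = n ∧ w.prod = g}

/-- The contraction coefficient `η_{p,n} ∈ [0,∞]`: the limsup of
`(Σ_{v ∈ X^n} l(g|_v)^p)^{1/p} / l(g)` as `l(g) → ∞` (along the filter generated by
the sets `{g : l(g) ≥ m}`).  Words of length `n` are encoded as functions `Fin n → X`. -/
noncomputable def eta {X G : Type*} [Fintype X] [Group G]
    (A : SelfSimilarGroup X G) (S : Finset G) (p : ℝ) (n : ℕ) : ℝ≥0∞ :=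
  Filter.limsup
    (fun g : G =>
      (∑ f : Fin n → X, (wordLength S (A.sec g (List.ofFn f)) : ℝ≥0∞) ^ p) ^ (1 / p)
        / (wordLength S g : ℝ≥0∞))
    (Filter.comap (wordLength S) Filter.atTop)

/-- `N` is the nucleus of a contracting self-similar group: a finite subset containing `1`,
closed under sections, absorbing all sections of every element at deep enough levels. -/
def SelfSimilarGroup.IsNucleus {X G : Type*} [Group G]
    (A : SelfSimilarGroup X G) (N : Finset G) : Prop :=
  (1 : G) ∈ N ∧ (∀ g ∈ N, ∀ v : List X, A.sec g v ∈ N) ∧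
    ∀ g : G, ∃ n₀ : ℕ, ∀ v : List X, n₀ ≤ v.length → A.sec g v ∈ N

/-- The portrait of `g`: `{ε}` if `g ∈ N`, and otherwise the set of words all of whose
proper prefixes have section outside the nucleus. -/
def SelfSimilarGroup.portrait {X G : Type*} [Group G] (A : SelfSimilarGroup X G)
    (N : Finset G) (g : G) : Set (List X) :=
  {v | (g ∈ N ∧ v = []) ∨ (g ∉ N ∧ ∀ u : List X, u <+: v → u ≠ v → A.sec g u ∉ N)}

/-! Pick `c` with `η_p < c < min η 1` and a level `n ≥ 1` with `η_{p,n} < cⁿ`. Then for all long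
enough `g`, `Σ_{|v| = n} l(g|_v)^p ≤ cⁿ l(g)^p`. A word of length `m > n` in `P(g)` splits as `v w`
with `|v| = n` and `w ∈ P(g|_v)`, so strong induction on `m` bounds the `m`-th level of `P(g)` by
`C cᵐ l(g)^p`. The induction bottoms out at elements of a finite ball, whose portraits have
uniformly bounded depth by contraction, and at low levels, bounded crudely by `|X|ᵐ`. Summing the
geometric series over the levels bounds `|P(g)|`. -/

section WordLength

variable {G : Type*} [Group G] {S : Finset G}

theorem exists_list_length_eq_wordLength (hgen : Subgroup.closure (S : Set G) = ⊤)
    (hsym : ∀ s ∈ S, s⁻¹ ∈ S) (g : G) :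
    ∃ w : List G, (∀ s ∈ w, s ∈ S) ∧ w.length = wordLength S g ∧ w.prod = g := by
  have hg : g ∈ (Subgroup.closure (S : Set G)).toSubmonoid := by simp [hgen]
  rw [Subgroup.closure_toSubmonoid] at hg
  obtain ⟨w, hwS, rfl⟩ := Submonoid.exists_list_of_mem_closure hg
  have hne :
      {n | ∃ w' : List G, (∀ s ∈ w', s ∈ S) ∧ w'.length = n ∧ w'.prod = w.prod}.Nonempty := by
    refine ⟨w.length, w, fun s hs => ?_, rfl, rfl⟩
    rcases hwS s hs with h | h
    · exact h
    · simpa using hsym _ h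
  exact Nat.sInf_mem hne

theorem one_le_wordLength (hgen : Subgroup.closure (S : Set G) = ⊤) (hsym : ∀ s ∈ S, s⁻¹ ∈ S)
    {g : G} (hg : g ≠ 1) : 1 ≤ wordLength S g := by
  obtain ⟨w, -, hlen, rfl⟩ := exists_list_length_eq_wordLength hgen hsym g
  rw [← hlen, Nat.one_le_iff_ne_zero, Ne, List.length_eq_zero_iff]
  rintro rfl
  exact hg List.prod_nil

theorem finite_setOf_wordLength_le (hgen : Subgroup.closure (S : Set G) = ⊤)
    (hsym : ∀ s ∈ S, s⁻¹ ∈ S) (m : ℕ) : {g : G | wordLength S g ≤ m}.Finite := by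
  refine ((List.finite_length_le S m).image fun w => (w.map Subtype.val).prod).subset ?_
  intro g hg
  obtain ⟨w, hwS, hlen, rfl⟩ := exists_list_length_eq_wordLength hgen hsym g
  lift w to List S using hwS
  refine ⟨w, ?_, rfl⟩
  rw [List.length_map] at hlen
  exact hlen.le.trans hg

end WordLength

theorem exists_lt_pow_of_iInf_rpow_inv_lt {a : ℕ → ℝ≥0∞} {c : ℝ≥0∞}
    (h : ⨅ (n : ℕ) (_ : 1 ≤ n), a n ^ (n : ℝ)⁻¹ < c) : ∃ n, 1 ≤ n ∧ a n < c ^ n := by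
  obtain ⟨n, hn, hlt⟩ : ∃ n, 1 ≤ n ∧ a n ^ (n : ℝ)⁻¹ < c := by simpa [iInf_lt_iff] using h
  refine ⟨n, hn, ?_⟩
  have hn' : (n : ℝ) ≠ 0 := by positivity
  calc a n = (a n ^ (n : ℝ)⁻¹) ^ (n : ℝ) := (ENNReal.rpow_inv_rpow hn' _).symm
    _ < c ^ (n : ℝ) := ENNReal.rpow_lt_rpow hlt (by positivity)
    _ = c ^ n := ENNReal.rpow_natCast c n

theorem pow_le_sum_range_div_pow_mul_pow {a c : ℝ≥0∞} (hc0 : c ≠ 0) (hc : c ≠ ⊤) {m R : ℕ}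
    (hm : m < R) : a ^ m ≤ (∑ k ∈ Finset.range R, (a / c) ^ k) * c ^ m := by
  calc a ^ m = (a / c) ^ m * c ^ m := by
        rw [← mul_pow, ENNReal.div_mul_cancel hc0 hc]
    _ ≤ _ := by
        gcongr
        exact Finset.single_le_sum (f := fun k => (a / c) ^ k) (fun _ _ => zero_le)
          (Finset.mem_range.2 hm)

section Words

variable {X : Type*}

theorem ncard_inter_setOf_length_eq_le [Fintype X] (s : Set (List X)) (m : ℕ) :
    (s ∩ {v | v.length = m}).ncard ≤ Fintype.card X ^ m := by
  refine (Set.ncard_le_ncard Set.inter_subset_right (List.finite_length_eq X m)).trans_eq ?_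
  rw [← Nat.card_coe_set_eq, ← card_vector, ← Nat.card_eq_fintype_card]
  rfl

theorem finite_and_ncard_le_of_ncard_inter_setOf_length_eq_le [Finite X] {s : Set (List X)}
    {r : ℕ} (hr : ∀ v ∈ s, v.length ≤ r) {a c : ℝ≥0∞}
    (hs : ∀ m, ((s ∩ {v | v.length = m}).ncard : ℝ≥0∞) ≤ a * c ^ m) :
    s.Finite ∧ (s.ncard : ℝ≥0∞) ≤ a * (1 - c)⁻¹ := by
  have hsub : s ⊆ ⋃ m ∈ Finset.range (r + 1), s ∩ {v | v.length = m} := fun v hv =>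
    Set.mem_biUnion (Finset.mem_range.2 (Nat.lt_succ_of_le (hr v hv))) ⟨hv, rfl⟩
  have hfin : (⋃ m ∈ Finset.range (r + 1), s ∩ {v | v.length = m}).Finite :=
    (Finset.finite_toSet _).biUnion fun m _ => (List.finite_length_eq X m).subset
      Set.inter_subset_right
  refine ⟨hfin.subset hsub, ?_⟩
  calc (s.ncard : ℝ≥0∞)
      ≤ ∑ m ∈ Finset.range (r + 1), ((s ∩ {v | v.length = m}).ncard : ℝ≥0∞) := by
        exact_mod_cast (Set.ncard_le_ncard hsub hfin).trans (Finset.set_ncard_biUnion_le _ _)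
    _ ≤ ∑ m ∈ Finset.range (r + 1), a * c ^ m := Finset.sum_le_sum fun m _ => hs m
    _ ≤ a * ∑' m, c ^ m := by rw [← Finset.mul_sum]; gcongr; exact ENNReal.sum_le_tsum _
    _ = a * (1 - c)⁻¹ := by rw [ENNReal.tsum_geometric]

end Words

namespace SelfSimilarGroup

variable {X G : Type*} [Group G] (A : SelfSimilarGroup X G) {N : Finset G}

theorem portrait_of_mem {g : G} (hg : g ∈ N) : A.portrait N g = {[]} := by
  ext v
  simp [portrait, hg]

theorem portrait_inter_setOf_length_eq_of_mem {g : G} (hg : g ∈ N) {m : ℕ} (hm : m ≠ 0) :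
    A.portrait N g ∩ {v | v.length = m} = ∅ := by
  rw [A.portrait_of_mem hg]
  ext v
  simp only [Set.mem_inter_iff, Set.mem_singleton_iff, Set.mem_ofPred_eq, Set.mem_empty_iff_false,
    iff_false, not_and]
  rintro rfl
  exact hm.symm

theorem mem_portrait_of_not_mem {g : G} (hg : g ∉ N) {v : List X} :
    v ∈ A.portrait N g ↔ ∀ u, u <+: v → u ≠ v → A.sec g u ∉ N := by
  simp [portrait, hg]

theorem length_le_of_mem_portrait {g : G} {r : ℕ}
    (hr : ∀ v : List X, r ≤ v.length → A.sec g v ∈ N) {v : List X} (hv : v ∈ A.portrait N g) :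
    v.length ≤ r := by
  by_cases hg : g ∈ N
  · rw [A.portrait_of_mem hg, Set.mem_singleton_iff] at hv
    simp [hv]
  by_contra! hlt
  refine (A.mem_portrait_of_not_mem hg).1 hv (v.take r) (List.take_prefix r v) ?_
    (hr _ (by simp; omega))
  rw [Ne, List.take_eq_self_iff]
  omega

theorem IsNucleus.exists_forall_sec_mem (hN : A.IsNucleus N) {B : Set G} (hB : B.Finite) :
    ∃ r, ∀ g ∈ B, ∀ v : List X, r ≤ v.length → A.sec g v ∈ N :=
  ((eventually_all_finite hB).2 fun g _ =>
    let ⟨r, hr⟩ := hN.2.2 g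
    eventually_atTop.2 ⟨r, fun _ hr' v hv => hr v (hr'.trans hv)⟩).exists

theorem portrait_inter_setOf_length_eq_subset {g : G} (hg : g ∉ N) {n m : ℕ} (hnm : n < m) :
    A.portrait N g ∩ {v | v.length = m} ⊆ ⋃ f : Fin n → X,
      (List.ofFn f ++ ·) '' (A.portrait N (A.sec g (List.ofFn f)) ∩ {v | v.length = m - n}) := by
  rintro v ⟨hv, rfl⟩
  obtain ⟨a, b, rfl, rfl⟩ : ∃ a b, v = a ++ b ∧ a.length = n :=
    ⟨v.take n, v.drop n, (List.take_append_drop n v).symm, by simp; omega⟩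
  rw [A.mem_portrait_of_not_mem hg] at hv
  have hb : b ≠ [] := by rintro rfl; simp at hnm
  refine Set.mem_iUnion.2 ⟨fun i => a[(i : ℕ)], b, ⟨?_, by simp⟩, by simp⟩
  rw [List.ofFn_getElem]
  have hsec : A.sec g a ∉ N := hv a (List.prefix_append a b) (by simpa using hb.symm)
  rw [A.mem_portrait_of_not_mem hsec]
  intro u hu hne
  rw [← A.sec_append]
  exact hv _ ((List.prefix_append_right_inj a).2 hu) (by simpa using hne)

theorem ncard_portrait_inter_setOf_length_eq_le_sum [Fintype X] {g : G} (hg : g ∉ N) {n m : ℕ}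
    (hnm : n < m) :
    (A.portrait N g ∩ {v | v.length = m}).ncard ≤
      ∑ f : Fin n → X, (A.portrait N (A.sec g (List.ofFn f)) ∩ {v | v.length = m - n}).ncard := by
  have hfin : ∀ f : Fin n → X, ((List.ofFn f ++ ·) ''
      (A.portrait N (A.sec g (List.ofFn f)) ∩ {v | v.length = m - n})).Finite := fun f =>
    ((List.finite_length_eq X _).subset Set.inter_subset_right).image _
  refine (Set.ncard_le_ncard (A.portrait_inter_setOf_length_eq_subset hg hnm)
    (Set.finite_iUnion hfin)).trans ((Set.ncard_iUnion_le_of_fintype _).trans_eq ?_)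
  simp_rw [Set.ncard_image_of_injective _ (List.append_right_injective _)]

theorem ncard_portrait_inter_setOf_length_eq_le [Fintype X] {w : G → ℝ≥0∞} {B : Set G}
    {n R : ℕ} {c C : ℝ≥0∞} (hn : 0 < n) (hnR : n < R) (hw : ∀ g ∉ N, 1 ≤ w g)
    (hsum : ∀ g ∉ B, ∑ f : Fin n → X, w (A.sec g (List.ofFn f)) ≤ c ^ n * w g)
    (hB : ∀ g ∈ B, ∀ v ∈ A.portrait N g, v.length < R)
    (hC : ∀ m < R, (Fintype.card X : ℝ≥0∞) ^ m ≤ C * c ^ m) (m : ℕ) {g : G} (hg : 1 ≤ w g) :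
    ((A.portrait N g ∩ {v | v.length = m}).ncard : ℝ≥0∞) ≤ C * c ^ m * w g := by
  induction m using Nat.strong_induction_on generalizing g with
  | _ m ih =>
  rcases lt_or_ge m R with hmR | hRm
  · calc ((A.portrait N g ∩ {v | v.length = m}).ncard : ℝ≥0∞)
        ≤ ((Fintype.card X ^ m : ℕ) : ℝ≥0∞) := by
          exact_mod_cast ncard_inter_setOf_length_eq_le _ m
      _ = (Fintype.card X : ℝ≥0∞) ^ m := by push_cast; rfl
      _ ≤ C * c ^ m := hC m hmR
      _ ≤ C * c ^ m * w g := le_mul_of_one_le_right' hg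
  by_cases hgN : g ∈ N
  · simp [A.portrait_inter_setOf_length_eq_of_mem hgN (by omega : m ≠ 0)]
  by_cases hgB : g ∈ B
  · have hempty : A.portrait N g ∩ {v | v.length = m} = ∅ :=
      Set.eq_empty_of_forall_notMem fun v ⟨hv, hlen⟩ => by
        have := hB g hgB v hv
        simp only [Set.mem_ofPred_eq] at hlen
        omega
    simp [hempty]
  have hsec : ∀ h : G, ((A.portrait N h ∩ {v | v.length = m - n}).ncard : ℝ≥0∞)
      ≤ C * c ^ (m - n) * w h := by
    intro h
    by_cases hhN : h ∈ N
    · simp [A.portrait_inter_setOf_length_eq_of_mem hhN (by omega : m - n ≠ 0)]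
    · exact ih (m - n) (by omega) (hw h hhN)
  calc ((A.portrait N g ∩ {v | v.length = m}).ncard : ℝ≥0∞)
      ≤ ∑ f : Fin n → X,
          ((A.portrait N (A.sec g (List.ofFn f)) ∩ {v | v.length = m - n}).ncard : ℝ≥0∞) := by
        exact_mod_cast A.ncard_portrait_inter_setOf_length_eq_le_sum hgN (by omega)
    _ ≤ ∑ f : Fin n → X, C * c ^ (m - n) * w (A.sec g (List.ofFn f)) :=
        Finset.sum_le_sum fun f _ => hsec _
    _ = C * c ^ (m - n) * ∑ f : Fin n → X, w (A.sec g (List.ofFn f)) := by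
        rw [Finset.mul_sum]
    _ ≤ C * c ^ (m - n) * (c ^ n * w g) := by gcongr; exact hsum g hgB
    _ = C * c ^ m * w g := by rw [← pow_sub_mul_pow c (by omega : n ≤ m)]; ring

end SelfSimilarGroup

theorem exists_sum_wordLength_sec_rpow_le {X G : Type*} [Fintype X] [Group G]
    (A : SelfSimilarGroup X G) (S : Finset G) {p : ℝ} (hp : 1 ≤ p) {n : ℕ} {b : ℝ≥0∞}
    (hb : b ≤ 1) (h : eta A S p n < b) :
    ∃ m₀, ∀ g : G, m₀ ≤ wordLength S g →
      ∑ f : Fin n → X, (wordLength S (A.sec g (List.ofFn f)) : ℝ≥0∞) ^ p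
        ≤ b * (wordLength S g : ℝ≥0∞) ^ p := by
  obtain ⟨m₁, hm₁⟩ := eventually_atTop.1 (eventually_comap.1 (eventually_lt_of_limsup_lt h))
  refine ⟨max m₁ 1, fun g hg => ?_⟩
  have hl : (wordLength S g : ℝ≥0∞) ≠ 0 := by simp; omega
  have hlt := hm₁ _ (le_of_max_le_left hg) g rfl
  rw [ENNReal.div_lt_iff (Or.inl hl) (Or.inl (ENNReal.natCast_ne_top _)), one_div] at hlt
  have hp0 : 0 < p := by linarith
  calc ∑ f : Fin n → X, (wordLength S (A.sec g (List.ofFn f)) : ℝ≥0∞) ^ p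
      = ((∑ f : Fin n → X, (wordLength S (A.sec g (List.ofFn f)) : ℝ≥0∞) ^ p) ^ p⁻¹) ^ p :=
        (ENNReal.rpow_inv_rpow hp0.ne' _).symm
    _ ≤ (b * wordLength S g) ^ p := ENNReal.rpow_le_rpow hlt.le hp0.le
    _ = b ^ p * (wordLength S g : ℝ≥0∞) ^ p := ENNReal.mul_rpow_of_nonneg _ _ hp0.le
    _ ≤ b * (wordLength S g : ℝ≥0∞) ^ p := by gcongr; exact ENNReal.rpow_le_self_of_le_one hb hp

theorem exists_ncard_portrait_inter_setOf_length_eq_le {X G : Type*} [Fintype X] [Group G]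
    (A : SelfSimilarGroup X G) {S N : Finset G} (hgen : Subgroup.closure (S : Set G) = ⊤)
    (hsym : ∀ s ∈ S, s⁻¹ ∈ S) (hN : A.IsNucleus N) {p : ℝ} (hp : 1 ≤ p) {n : ℕ} (hn : 1 ≤ n)
    {c : ℝ≥0∞} (hc : c < 1) (hnc : eta A S p n < c ^ n) :
    ∃ C : ℝ≥0∞, C ≠ ⊤ ∧ ∀ g : G, g ≠ 1 → ∀ m : ℕ,
      ((A.portrait N g ∩ {v | v.length = m}).ncard : ℝ≥0∞)
        ≤ C * c ^ m * (wordLength S g : ℝ≥0∞) ^ p := by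
  have hw : ∀ g : G, g ≠ 1 → 1 ≤ (wordLength S g : ℝ≥0∞) ^ p := fun g hg =>
    ENNReal.one_le_rpow (by exact_mod_cast one_le_wordLength hgen hsym hg) (by linarith)
  have hc0 : c ≠ 0 := by
    rintro rfl
    simp [zero_pow (by omega : n ≠ 0)] at hnc
  obtain ⟨m₀, hm₀⟩ := exists_sum_wordLength_sec_rpow_le A S hp (pow_le_one₀ zero_le hc.le) hnc
  obtain ⟨r, hr⟩ := hN.exists_forall_sec_mem A (finite_setOf_wordLength_le hgen hsym m₀)
  refine ⟨∑ k ∈ Finset.range (max r n + 1), ((Fintype.card X : ℝ≥0∞) / c) ^ k,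
    ENNReal.sum_ne_top.2 fun k _ =>
      ENNReal.pow_ne_top (ENNReal.div_ne_top (ENNReal.natCast_ne_top _) hc0), fun g hg m => ?_⟩
  refine A.ncard_portrait_inter_setOf_length_eq_le (B := {g | wordLength S g ≤ m₀})
    (by omega) (by omega) (fun h hh => hw h fun h1 => hh (h1 ▸ hN.1))
    (fun h hh => hm₀ h ?_) (fun h hh v hv => ?_)
    (fun m hm => pow_le_sum_range_div_pow_mul_pow hc0 hc.ne_top hm) m (hw g hg)
  · simp only [Set.mem_ofPred_eq, not_le] at hh
    exact hh.le
  · have := A.length_le_of_mem_portrait (hr h hh) hv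
    omega

theorem portrait_size_bound_general {X G : Type*} [Fintype X] [Group G]
    (A : SelfSimilarGroup X G) (S N : Finset G)
    (hgen : Subgroup.closure (S : Set G) = ⊤)
    (hsym : ∀ s ∈ S, s⁻¹ ∈ S)
    (hN : A.IsNucleus N)
    (p : ℝ) (hp : 1 ≤ p)
    (hcontr : ∃ n₀ : ℕ, 1 ≤ n₀ ∧ eta A S p n₀ < 1)
    (η : ℝ≥0∞)
    (hη : (⨅ (n : ℕ) (_ : 1 ≤ n), eta A S p n ^ ((n : ℝ)⁻¹)) < η) :
    ∃ C : ℝ≥0, 1 < C ∧ ∀ g : G, g ≠ 1 →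
      (A.portrait N g).Finite ∧
      (∀ n : ℕ, ((A.portrait N g ∩ {v : List X | v.length = n}).ncard : ℝ≥0∞)
          ≤ (C : ℝ≥0∞) * η ^ n * (wordLength S g : ℝ≥0∞) ^ p) ∧
      ((A.portrait N g).ncard : ℝ≥0∞) ≤ (C : ℝ≥0∞) * (wordLength S g : ℝ≥0∞) ^ p := by
  obtain ⟨n₀, hn₀, hn₀1⟩ := hcontr
  have hinf : (⨅ (n : ℕ) (_ : 1 ≤ n), eta A S p n ^ ((n : ℝ)⁻¹)) < 1 :=
    (iInf₂_le n₀ hn₀).trans_lt (ENNReal.rpow_lt_one hn₀1 (by positivity))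
  obtain ⟨c, hinfc, hc⟩ := exists_between (lt_min hη hinf)
  have hcη : c < η := hc.trans_le (min_le_left _ _)
  have hc1 : c < 1 := hc.trans_le (min_le_right _ _)
  obtain ⟨n, hn, hnc⟩ := exists_lt_pow_of_iInf_rpow_inv_lt hinfc
  obtain ⟨C, hC, hlevel⟩ :=
    exists_ncard_portrait_inter_setOf_length_eq_le A hgen hsym hN hp hn hc1 hnc
  set K := C * (1 - c)⁻¹
  have hCK : C ≤ K := le_mul_of_one_le_right' (ENNReal.one_le_inv.2 tsub_le_self)
  have hK : K ≤ (max K.toNNReal 2 : ℝ≥0) := by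
    rw [ENNReal.coe_max, ENNReal.coe_toNNReal
      (ENNReal.mul_ne_top hC (ENNReal.inv_ne_top.2 (tsub_pos_of_lt hc1).ne'))]
    exact le_max_left _ _
  refine ⟨max K.toNNReal 2, lt_max_of_lt_right one_lt_two, fun g hg => ?_⟩
  obtain ⟨r, hr⟩ := hN.2.2 g
  obtain ⟨hfin, hcard⟩ := finite_and_ncard_le_of_ncard_inter_setOf_length_eq_le
    (fun v hv => A.length_le_of_mem_portrait hr hv)
    (fun m => (hlevel g hg m).trans_eq (mul_right_comm _ _ _))
  refine ⟨hfin, fun m => (hlevel g hg m).trans ?_, hcard.trans ?_⟩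
  · gcongr
    exact hCK.trans hK
  · rw [mul_right_comm]
    gcongr

/-- Proposition 4.6. Suppose `G` is contracting with nucleus `N ⊆ S`,
`p ≥ 1` and `η_{p,n₀} < 1` for some `n₀ ≥ 1`; set `η_p := inf_{n ≥ 1} η_{p,n}^{1/n}`.
Then for every `η > η_p` there is `C > 1` with `|P(g) ∩ X^n| ≤ C·η^n·l(g)^p` and
`|P(g)| ≤ C·l(g)^p` for every `g ≠ 1` and `n ≥ 0`; in particular `P(g)` is finite. -/
theorem portrait_size_bound {X G : Type*} [Fintype X] [Nonempty X] [Group G]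
    (A : SelfSimilarGroup X G) (S N : Finset G)
    (hgen : Subgroup.closure (S : Set G) = ⊤)
    (hsym : ∀ s ∈ S, s⁻¹ ∈ S)
    (hN : A.IsNucleus N) (hNS : N ⊆ S)
    (p : ℝ) (hp : 1 ≤ p)
    (hcontr : ∃ n₀ : ℕ, 1 ≤ n₀ ∧ eta A S p n₀ < 1)
    (η : ℝ≥0∞)
    (hη : (⨅ (n : ℕ) (_ : 1 ≤ n), eta A S p n ^ ((n : ℝ)⁻¹)) < η) :
    ∃ C : ℝ≥0, 1 < C ∧ ∀ g : G, g ≠ 1 →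
      (A.portrait N g).Finite ∧
      (∀ n : ℕ, ((A.portrait N g ∩ {v : List X | v.length = n}).ncard : ℝ≥0∞)
          ≤ (C : ℝ≥0∞) * η ^ n * (wordLength S g : ℝ≥0∞) ^ p) ∧
      ((A.portrait N g).ncard : ℝ≥0∞) ≤ (C : ℝ≥0∞) * (wordLength S g : ℝ≥0∞) ^ p :=
  portrait_size_bound_general A S N hgen hsym hN p hp hcontr η hη
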